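/- Let u : ℝ → ℝ be continuous, let y : ℝ → ℝ be a twice continuously differentiable solution of Hill's equation y'' + u·y = 0, and let φ : ℝ → ℝ be three times continuously differentiable with φ'(x) > 0 for all x. Define z(x) = y(φ(x))·(φ'(x))^{−1/2}. Then z satisfies the transformed Hill equation z''(x) + ũ(x)·z(x) = 0 for all x, where ũ(x) = u(φ(x))·(φ'(x))² + (1/2)·S(φ)(x). (Solutions of Hill's equation transform as densities of degree −1/2 under diffeomorphisms, and the potential transforms by the Virasoro coadjoint action.) -/

import Mathlib

/-!
Write `z = (y ∘ φ) · w` with `w = (φ')^{-1/2}`. By the chain and Leibniz rules,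
`z'' = (y'' ∘ φ) φ'² w + (y' ∘ φ)(φ'' w + 2 φ' w') + (y ∘ φ) w''`.
The weight `w` is exactly the one for which the first-order term vanishes
(`w' = -(φ''/2φ') w`), and then `w'' = -(1/2) S(φ) w`; substituting `y'' = -u y`
gives the transformed equation.
-/

open Real

/-- The Schwarzian derivative `S(φ) = φ'''/φ' − (3/2)·(φ''/φ')²`. -/
noncomputable def schwarzian (φ : ℝ → ℝ) (x : ℝ) : ℝ :=
  iteratedDeriv 3 φ x / deriv φ x - (3 / 2) * (iteratedDeriv 2 φ x / deriv φ x) ^ 2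

theorem deriv_deriv_comp_mul {y φ w : ℝ → ℝ} (hy : ContDiff ℝ 2 y) (hφ : ContDiff ℝ 2 φ)
    (hw : ContDiff ℝ 2 w) (x : ℝ) :
    deriv (deriv fun s => y (φ s) * w s) x =
      deriv (deriv y) (φ x) * deriv φ x ^ 2 * w x
        + deriv y (φ x) * (deriv (deriv φ) x * w x + 2 * deriv φ x * deriv w x)
        + y (φ x) * deriv (deriv w) x := by
  have hy₁ := hy.differentiable two_ne_zero
  have hφ₁ := hφ.differentiable two_ne_zero
  have hw₁ := hw.differentiable two_ne_zero
  have hy₂ := hy.differentiable_deriv_two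
  have hφ₂ := hφ.differentiable_deriv_two
  have hw₂ := hw.differentiable_deriv_two
  have hcomp : ∀ {f : ℝ → ℝ}, Differentiable ℝ f → ∀ s,
      HasDerivAt (fun t => f (φ t)) (deriv f (φ s) * deriv φ s) s :=
    fun hf s => (hf (φ s)).hasDerivAt.comp s (hφ₁ s).hasDerivAt
  have hderiv : deriv (fun s => y (φ s) * w s)
      = fun s => deriv y (φ s) * deriv φ s * w s + y (φ s) * deriv w s :=
    funext fun s => ((hcomp hy₁ s).mul (hw₁ s).hasDerivAt).deriv
  rw [hderiv]
  have hsecond :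
      HasDerivAt (fun s => deriv y (φ s) * deriv φ s * w s + y (φ s) * deriv w s) _ x :=
    (((hcomp hy₂ x).mul (hφ₂ x).hasDerivAt).mul (hw₁ x).hasDerivAt).add
      ((hcomp hy₁ x).mul (hw₂ x).hasDerivAt)
  rw [hsecond.deriv, Pi.mul_apply]
  ring

theorem hasDerivAt_inv_sqrt {p : ℝ → ℝ} {p' x : ℝ} (hp : HasDerivAt p p' x) (hpos : 0 < p x) :
    HasDerivAt (fun s => (√(p s))⁻¹) (-(p' / (2 * p x)) * (√(p x))⁻¹) x := by
  refine ((hp.sqrt hpos.ne').inv (sqrt_pos.mpr hpos).ne').congr_deriv ?_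
  field_simp
  rw [sq_sqrt hpos.le]

theorem deriv_inv_sqrt {p : ℝ → ℝ} (hp : Differentiable ℝ p) (hpos : ∀ s, 0 < p s) :
    deriv (fun s => (√(p s))⁻¹) = fun s => -(deriv p s / (2 * p s)) * (√(p s))⁻¹ :=
  funext fun s => (hasDerivAt_inv_sqrt (hp s).hasDerivAt (hpos s)).deriv

theorem deriv_deriv_inv_sqrt {p : ℝ → ℝ} (hp : ContDiff ℝ 2 p) (hpos : ∀ s, 0 < p s) (x : ℝ) :
    deriv (deriv fun s => (√(p s))⁻¹) x
      = -(1 / 2) * (deriv (deriv p) x / p x - 3 / 2 * (deriv p x / p x) ^ 2) * (√(p x))⁻¹ := by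
  have hp₁ := hp.differentiable two_ne_zero
  rw [deriv_inv_sqrt hp₁ hpos]
  have hquot := (hp.differentiable_deriv_two x).hasDerivAt.div
    ((hp₁ x).hasDerivAt.const_mul 2) (mul_pos two_pos (hpos x)).ne'
  have hw' : HasDerivAt (fun s => -(deriv p s / (2 * p s)) * (√(p s))⁻¹) _ x :=
    hquot.neg.mul (hasDerivAt_inv_sqrt (hp₁ x).hasDerivAt (hpos x))
  rw [hw'.deriv, Pi.neg_apply, Pi.div_apply]
  field_simp [(hpos x).ne']
  ring

theorem schwarzian_eq_deriv (φ : ℝ → ℝ) (x : ℝ) :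
    schwarzian φ x = deriv (deriv (deriv φ)) x / deriv φ x
      - 3 / 2 * (deriv (deriv φ) x / deriv φ x) ^ 2 := by
  simp only [schwarzian, iteratedDeriv_eq_iterate, Function.iterate_succ_apply',
    Function.iterate_zero_apply]

theorem hill_density_transform_general
    (u y φ : ℝ → ℝ)
    (hy : ContDiff ℝ 2 y)
    (hye : ∀ x : ℝ, iteratedDeriv 2 y x + u x * y x = 0)
    (hφ : ContDiff ℝ 3 φ) (hφ' : ∀ x : ℝ, 0 < deriv φ x) :
    ∀ x : ℝ, iteratedDeriv 2 (fun s => y (φ s) / Real.sqrt (deriv φ s)) x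
        + (u (φ x) * (deriv φ x) ^ 2 + (1 / 2) * schwarzian φ x)
          * (y (φ x) / Real.sqrt (deriv φ x)) = 0 := by
  intro x
  have hp : ContDiff ℝ 2 (deriv φ) := hφ.deriv'
  have hw : ContDiff ℝ 2 fun s => (√(deriv φ s))⁻¹ :=
    (hp.sqrt fun s => (hφ' s).ne').inv fun s => (sqrt_pos.mpr (hφ' s)).ne'
  have hcancel : deriv (deriv φ) x * (√(deriv φ x))⁻¹
      + 2 * deriv φ x * deriv (fun s => (√(deriv φ s))⁻¹) x = 0 := by
    rw [deriv_inv_sqrt (hp.differentiable two_ne_zero) hφ']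
    field_simp [(hφ' x).ne']
    ring
  simp only [iteratedDeriv_eq_iterate, Function.iterate_succ_apply', Function.iterate_zero_apply,
    div_eq_mul_inv] at hye ⊢
  rw [deriv_deriv_comp_mul hy (hφ.of_le (by norm_num)) hw, hcancel,
    deriv_deriv_inv_sqrt hp hφ', schwarzian_eq_deriv, ← div_eq_mul_inv]
  linear_combination (deriv φ x ^ 2 * (√(deriv φ x))⁻¹) * hye (φ x)

/-- Solutions of Hill's equation transform as densities of degree `−1/2` under
diffeomorphisms: if `y'' + u·y = 0` and `z = (y∘φ)·(φ')^{-1/2}`, then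
`z'' + ũ·z = 0` with `ũ = (u∘φ)·(φ')² + (1/2)·S(φ)` (the Virasoro coadjoint
action on the potential). -/
theorem hill_density_transform
    (u y φ : ℝ → ℝ) (hu : Continuous u)
    (hy : ContDiff ℝ 2 y)
    (hye : ∀ x : ℝ, iteratedDeriv 2 y x + u x * y x = 0)
    (hφ : ContDiff ℝ 3 φ) (hφ' : ∀ x : ℝ, 0 < deriv φ x) :
    ∀ x : ℝ, iteratedDeriv 2 (fun s => y (φ s) / Real.sqrt (deriv φ s)) x
        + (u (φ x) * (deriv φ x) ^ 2 + (1 / 2) * schwarzian φ x)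
          * (y (φ x) / Real.sqrt (deriv φ x)) = 0 :=
  hill_density_transform_general u y φ hy hye hφ hφ'
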